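/- In the Neveu-Schwarz-Block module Ω_L(λ, a, b), the anticommutator relation holds: G_{l,i}G_{r,j}f(t) + G_{r,j}G_{l,i}f(t) = 2q λ^{r+l}(δ_{i+j,0}(t - (l+r)qa) + δ_{q,-1}δ_{i+j,1}b) f(t - (l+r)q) = 2q L_{r+l,i+j}f(t), for all l, r ∈ 1/2 + ℤ, i, j ∈ ℤ₊ and f ∈ ℂ[t]. -/
import Mathlib


open Polynomial

/-- Action (4.1) of `L_{m,i}` on the even part `ℂ[t]` of `Ω_L(λ,a,b)`. -/
noncomputable def LeL (q lam a b : ℂ) (m : ℤ) (i : ℕ) (f : Polynomial ℂ) : Polynomial ℂ :=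
  lam ^ m • (((if i = 0 then X - C ((m : ℂ) * q * a) else 0) +
      (if q = -1 ∧ i = 1 then C b else 0)) * f.comp (X - C ((m : ℂ) * q)))

/-- Action (4.2) of `L_{m,i}` on the odd part `ℂ[x]` of `Ω_L(λ,a,b)`. -/
noncomputable def LoL (q lam a b : ℂ) (m : ℤ) (i : ℕ) (g : Polynomial ℂ) : Polynomial ℂ :=
  lam ^ m • (((if i = 0 then X - C ((m : ℂ) * q * a + (m : ℂ) * q / 2) else 0) +
      (if q = -1 ∧ i = 1 then C b else 0)) * g.comp (X - C ((m : ℂ) * q)))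

/-- Action (4.3) of `G_{r,i}` (with `r = k + 1/2`, encoded by `k ∈ ℤ`) sending the even
part `ℂ[t]` to the odd part `ℂ[x]`: `G_{r,i} f(t) = λ^{r-1/2} δ_{i,0} f(x - rq)`. -/
noncomputable def GeoL (q lam : ℂ) (k : ℤ) (i : ℕ) (f : Polynomial ℂ) : Polynomial ℂ :=
  lam ^ k • (if i = 0 then f.comp (X - C (((k : ℂ) + 1 / 2) * q)) else 0)

/-- Action (4.4) of `G_{r,i}` (with `r = k + 1/2`, encoded by `k ∈ ℤ`) sending the odd
part `ℂ[x]` to the even part `ℂ[t]`: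
`G_{r,i} g(x) = qλ^{r+1/2}(δ_{i,0}(t - 2rqa) + 2δ_{q,-1}δ_{i,1}b) g(t - rq)`. -/
noncomputable def GoeL (q lam a b : ℂ) (k : ℤ) (i : ℕ) (g : Polynomial ℂ) : Polynomial ℂ :=
  (q * lam ^ (k + 1)) •
    (((if i = 0 then X - C (2 * ((k : ℂ) + 1 / 2) * q * a) else 0) +
      (if q = -1 ∧ i = 1 then C (2 * b) else 0)) * g.comp (X - C (((k : ℂ) + 1 / 2) * q)))

/-- In `Ω_L(λ,a,b)` the anticommutator relation holds (with `l = k₁ + 1/2`,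
`r = k₂ + 1/2`):
`G_{l,i}G_{r,j}f + G_{r,j}G_{l,i}f
  = 2qλ^{r+l}(δ_{i+j,0}(t - (l+r)qa) + δ_{q,-1}δ_{i+j,1}b) f(t - (l+r)q)
  = 2q L_{r+l,i+j} f`. -/
theorem OmegaL_GG_anticommutator (q lam a b : ℂ) (hq : q ≠ 0) (hlam : lam ≠ 0)
    (k₁ k₂ : ℤ) (i j : ℕ) (f : Polynomial ℂ) :
    GoeL q lam a b k₁ i (GeoL q lam k₂ j f) + GoeL q lam a b k₂ j (GeoL q lam k₁ i f) =
      (2 * q * lam ^ (k₁ + k₂ + 1)) •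
        (((if i + j = 0 then X - C (((k₁ : ℂ) + (k₂ : ℂ) + 1) * q * a) else 0) +
          (if q = -1 ∧ i + j = 1 then C b else 0)) *
         f.comp (X - C (((k₁ : ℂ) + (k₂ : ℂ) + 1) * q))) ∧
    GoeL q lam a b k₁ i (GeoL q lam k₂ j f) + GoeL q lam a b k₂ j (GeoL q lam k₁ i f) =
      (2 * q) • LeL q lam a b (k₁ + k₂ + 1) (i + j) f := by
  have key : GoeL q lam a b k₁ i (GeoL q lam k₂ j f) + GoeL q lam a b k₂ j (GeoL q lam k₁ i f) =
      (2 * q * lam ^ (k₁ + k₂ + 1)) •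
        (((if i + j = 0 then X - C (((k₁ : ℂ) + (k₂ : ℂ) + 1) * q * a) else 0) +
          (if q = -1 ∧ i + j = 1 then C b else 0)) *
         f.comp (X - C (((k₁ : ℂ) + (k₂ : ℂ) + 1) * q))) := by
    unfold GoeL GeoL
    by_cases hi : i = 0 <;> by_cases hj : j = 0 <;>
      by_cases hq1 : q = -1 <;>
      simp only [hi, hj, if_true, if_false, Nat.add_eq_zero, and_true, and_false, true_and,
        if_pos, reduceIte, add_zero, zero_add, zero_mul, mul_zero, smul_zero, comp_zero] <;>
      apply Polynomial.funext <;> intro z <;>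
      simp only [eval_add, eval_smul, eval_mul, eval_sub, eval_X, eval_C, eval_comp, eval_zero,
        smul_eq_mul, zpow_add₀ hlam, zpow_one, hi, hj, hq1] <;>
      split_ifs <;>
      first
        | omega
        | (simp_all <;> ring_nf)
  refine ⟨key, key.trans ?_⟩
  unfold LeL
  rw [smul_smul]
  push_cast
  ring_nf
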